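/- A topological space X is normal if and only if for every continuous map χ : X → V there exists a continuous map λ : X → I₀¹ with π ∘ λ = χ. -/

import Mathlib

open unitInterval

/-- The interval with doubled endpoints: `[0,1]` together with extra points
`0' = Sum.inr false` and `1' = Sum.inr true`, with `0 ⤳ 0'` and `1 ⤳ 1'`. -/
def I01 : Type := unitInterval ⊕ Bool

instance : TopologicalSpace I01 where
  IsOpen U := IsOpen (Sum.inl ⁻¹' U : Set unitInterval) ∧
    (Sum.inr false ∈ U → Sum.inl (0 : unitInterval) ∈ U) ∧
    (Sum.inr true ∈ U → Sum.inl (1 : unitInterval) ∈ U)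
  isOpen_univ := ⟨isOpen_univ, fun _ => trivial, fun _ => trivial⟩
  isOpen_inter U V hU hV := ⟨hU.1.inter hV.1,
    fun h => ⟨hU.2.1 h.1, hV.2.1 h.2⟩, fun h => ⟨hU.2.2 h.1, hV.2.2 h.2⟩⟩
  isOpen_sUnion S hS := by
    refine ⟨?_, ?_, ?_⟩
    · have h : (Sum.inl ⁻¹' ⋃₀ S : Set unitInterval) = ⋃ U ∈ S, (Sum.inl ⁻¹' U : Set unitInterval) :=
        Set.preimage_sUnion
      exact (congrArg IsOpen h).mpr (isOpen_biUnion fun U hU => (hS U hU).1)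
    · rintro ⟨U, hU, hmem⟩
      exact ⟨U, hU, (hS U hU).2.1 hmem⟩
    · rintro ⟨U, hU, hmem⟩
      exact ⟨U, hU, (hS U hU).2.2 hmem⟩

/-- The three-point space with an open point `c` and two closed points `L`, `R`. -/
inductive V : Type
  | L | c | R

instance : TopologicalSpace V where
  IsOpen U := (V.L ∈ U → V.c ∈ U) ∧ (V.R ∈ U → V.c ∈ U)
  isOpen_univ := ⟨fun _ => trivial, fun _ => trivial⟩
  isOpen_inter U W hU hW := ⟨fun h => ⟨hU.1 h.1, hW.1 h.2⟩, fun h => ⟨hU.2 h.1, hW.2 h.2⟩⟩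
  isOpen_sUnion S hS := by
    constructor
    · rintro ⟨U, hU, hmem⟩
      exact ⟨U, hU, (hS U hU).1 hmem⟩
    · rintro ⟨U, hU, hmem⟩
      exact ⟨U, hU, (hS U hU).2 hmem⟩

/-- The map `π : I₀¹ → V` collapsing `[0,1]` to the open point `c`. -/
def pi1 : I01 → V
  | Sum.inl _ => V.c
  | Sum.inr false => V.L
  | Sum.inr true => V.R

/-- The map `ι : I₀¹ → [0,1]` collapsing the doubled endpoints. -/
def iota : I01 → unitInterval
  | Sum.inl x => x
  | Sum.inr false => 0
  | Sum.inr true => 1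

open Set

/-
Continuous maps `χ : X → V` are the same as pairs of disjoint closed sets `(χ⁻¹ L, χ⁻¹ R)`,
and `I₀¹` carries the topology induced by `(ι, π) : I₀¹ → [0,1] × V`. Hence a lift of `χ`
amounts to a continuous `f : X → [0,1]` with `f = 0` on `χ⁻¹ L` and `f = 1` on `χ⁻¹ R`,
i.e. an Urysohn function for this pair, and all such functions exist exactly when `X` is normal.
-/

lemma isOpen_setOf_mem_imp {X : Type*} [TopologicalSpace X] {s : Set X} (hs : IsClosed s)
    (p : Prop) : IsOpen {x | x ∈ s → p} := by
  by_cases hp : p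
  · simp [hp]
  · simp only [hp, imp_false]
    exact hs.isOpen_compl

namespace V

variable {X : Type*}

lemma isClosed_singleton_L : IsClosed ({L} : Set V) :=
  isOpen_compl_iff.mp ⟨by simp, by simp⟩

lemma isClosed_singleton_R : IsClosed ({R} : Set V) :=
  isOpen_compl_iff.mp ⟨by simp, by simp⟩

lemma eq_setOf_of_isOpen {U : Set V} (hU : IsOpen U) :
    U = {v | c ∈ U ∧ (v = L → L ∈ U) ∧ (v = R → R ∈ U)} := by
  obtain ⟨hL, hR⟩ := hU
  ext (_ | _ | _) <;> simp <;> tauto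

lemma continuous_iff [TopologicalSpace X] {χ : X → V} :
    Continuous χ ↔ IsClosed (χ ⁻¹' {L}) ∧ IsClosed (χ ⁻¹' {R}) := by
  refine ⟨fun hχ => ⟨isClosed_singleton_L.preimage hχ, isClosed_singleton_R.preimage hχ⟩,
    fun ⟨hL, hR⟩ => continuous_def.mpr fun U hU => ?_⟩
  rw [eq_setOf_of_isOpen hU]
  exact isOpen_const.inter ((isOpen_setOf_mem_imp hL _).inter (isOpen_setOf_mem_imp hR _))

open Classical in
noncomputable def classifyingMap (s t : Set X) (x : X) : V :=
  if x ∈ s then L else if x ∈ t then R else c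

lemma preimage_classifyingMap_L (s t : Set X) : classifyingMap s t ⁻¹' {L} = s := by
  ext x
  by_cases hs : x ∈ s <;> by_cases ht : x ∈ t <;> simp [classifyingMap, hs, ht]

lemma preimage_classifyingMap_R {s t : Set X} (hst : Disjoint s t) :
    classifyingMap s t ⁻¹' {R} = t := by
  ext x
  by_cases hs : x ∈ s <;> by_cases ht : x ∈ t <;> simp [classifyingMap, hs, ht]
  exact hst.notMem_of_mem_left hs ht

lemma continuous_classifyingMap [TopologicalSpace X] {s t : Set X} (hs : IsClosed s)
    (ht : IsClosed t) (hst : Disjoint s t) : Continuous (classifyingMap s t) :=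
  continuous_iff.mpr
    ⟨(preimage_classifyingMap_L s t).symm ▸ hs, (preimage_classifyingMap_R hst).symm ▸ ht⟩

end V

namespace I01

variable {X : Type*} [TopologicalSpace X]

lemma continuous_iota : Continuous iota :=
  ⟨fun _ hW => ⟨hW, id, id⟩⟩

lemma continuous_pi1 : Continuous pi1 :=
  ⟨fun U hU => ⟨isOpen_const (p := V.c ∈ U), hU.1, hU.2⟩⟩

lemma eq_setOf_of_isOpen {U : Set I01} (hU : IsOpen U) :
    U = {z | iota z ∈ Sum.inl ⁻¹' U ∧ (pi1 z = V.L → Sum.inr false ∈ U) ∧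
      (pi1 z = V.R → Sum.inr true ∈ U)} := by
  obtain ⟨-, h0, h1⟩ := hU
  ext (_ | _ | _)
  exacts [⟨fun h => ⟨h, nofun, nofun⟩, fun h => h.1⟩,
    ⟨fun h => ⟨h0 h, fun _ => h, nofun⟩, fun h => h.2.1 rfl⟩,
    ⟨fun h => ⟨h1 h, nofun, fun _ => h⟩, fun h => h.2.2 rfl⟩]

lemma continuous_iff {lam : X → I01} :
    Continuous lam ↔ Continuous (iota ∘ lam) ∧ Continuous (pi1 ∘ lam) := by
  refine ⟨fun h => ⟨continuous_iota.comp h, continuous_pi1.comp h⟩,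
    fun ⟨hι, hπ⟩ => continuous_def.mpr fun U hU => ?_⟩
  obtain ⟨hL, hR⟩ := V.continuous_iff.mp hπ
  rw [eq_setOf_of_isOpen hU]
  exact (hU.1.preimage hι).inter ((isOpen_setOf_mem_imp hL _).inter (isOpen_setOf_mem_imp hR _))

def mk (t : unitInterval) : V → I01
  | V.L => Sum.inr false
  | V.c => Sum.inl t
  | V.R => Sum.inr true

lemma pi1_mk (t : unitInterval) (v : V) : pi1 (mk t v) = v := by
  cases v <;> rfl

lemma iota_mk {t : unitInterval} {v : V} (hL : v = V.L → t = 0) (hR : v = V.R → t = 1) :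
    iota (mk t v) = t := by
  cases v <;> simp_all [mk, iota]

lemma iota_eq_zero_of_pi1_eq_L {z : I01} (h : pi1 z = V.L) : iota z = 0 := by
  rcases z with _ | _ | _ <;> simp_all [pi1, iota]

lemma iota_eq_one_of_pi1_eq_R {z : I01} (h : pi1 z = V.R) : iota z = 1 := by
  rcases z with _ | _ | _ <;> simp_all [pi1, iota]

end I01

section

variable {X : Type*} [TopologicalSpace X]

theorem exists_lift_of_normalSpace [NormalSpace X] {χ : X → V} (hχ : Continuous χ) :
    ∃ lam : X → I01, Continuous lam ∧ pi1 ∘ lam = χ := by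
  obtain ⟨hL, hR⟩ := V.continuous_iff.mp hχ
  have hLR : Disjoint (χ ⁻¹' {V.L}) (χ ⁻¹' {V.R}) :=
    (disjoint_singleton.mpr V.noConfusion).preimage χ
  obtain ⟨f, hf0, hf1, hf01⟩ := exists_continuous_zero_one_of_isClosed hL hR hLR
  let g : X → unitInterval := fun x => ⟨f x, hf01 x⟩
  let lam : X → I01 := fun x => I01.mk (g x) (χ x)
  have hι : iota ∘ lam = g :=
    funext fun _ => I01.iota_mk (fun h => Subtype.ext (hf0 h)) (fun h => Subtype.ext (hf1 h))
  have hπ : pi1 ∘ lam = χ := funext fun _ => I01.pi1_mk _ _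
  refine ⟨lam, I01.continuous_iff.mpr ⟨?_, hπ ▸ hχ⟩, hπ⟩
  exact hι ▸ f.continuous.subtype_mk hf01

theorem normalSpace_of_forall_exists_lift
    (h : ∀ χ : X → V, Continuous χ → ∃ lam : X → I01, Continuous lam ∧ pi1 ∘ lam = χ) :
    NormalSpace X := by
  refine ⟨fun s t hs ht hst => ?_⟩
  obtain ⟨lam, hlam, hπ⟩ := h _ (V.continuous_classifyingMap hs ht hst)
  have hsep : SeparatedNhds ({0} : Set unitInterval) {1} :=
    .of_finite (finite_singleton 0) (finite_singleton 1) (by simp)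
  refine (hsep.preimage (I01.continuous_iota.comp hlam)).mono (fun x hx => ?_) (fun x hx => ?_)
  · rw [← V.preimage_classifyingMap_L s t, ← hπ] at hx
    exact I01.iota_eq_zero_of_pi1_eq_L hx
  · rw [← V.preimage_classifyingMap_R hst, ← hπ] at hx
    exact I01.iota_eq_one_of_pi1_eq_R hx

end

/-- `X` is normal iff every continuous `χ : X → V` lifts through
`π : I₀¹ → V`. -/
theorem normal_iff_lifts (X : Type) [TopologicalSpace X] :
    NormalSpace X ↔
      ∀ χ : X → V, Continuous χ →
        ∃ lam : X → I01, Continuous lam ∧ pi1 ∘ lam = χ :=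
  ⟨fun _ _ hχ => exists_lift_of_normalSpace hχ, normalSpace_of_forall_exists_lift⟩
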